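/- (Proposition 4) For all natural numbers a, b, c, d, with B_max = min(b, c), C_max = min(a, d), A_max = min(a − C_max, c − B_max), and D_max = min(b − B_max, d − C_max), one has B_max + C_max + A_max + D_max = min(a + b, c + d). Here a is the number of treated units with positive outcome, b the number of treated units with negative outcome, c the number of control units with positive outcome, and d the number of control units with negative outcome in a partition, so this identity states that the discordant-pair assignment of Algorithm 1 extends to a matching of the maximum possible number min(a + b, c + d) of treatment–control pairs. -/
import Mathlib


/-- Proposition 4: with `a` treated-positive, `b` treated-negative,
`c` control-positive and `d` control-negative units in a partition, setting
`B_max = min(b, c)`, `C_max = min(a, d)`, `A_max = min(a − C_max, c − B_max)`,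
`D_max = min(b − B_max, d − C_max)` (truncated subtraction), one has
`B_max + C_max + A_max + D_max = min(a + b, c + d)`: the discordant-pair
assignment of Algorithm 1 extends to a matching of the maximum possible number
of treatment–control pairs. -/
theorem algorithm1_max_pairs (a b c d : ℕ) :
    min b c + min a d + min (a - min a d) (c - min b c) +
      min (b - min b c) (d - min a d) = min (a + b) (c + d) := by
  rcases Nat.le_total b c with h1 | h1 <;> rcases Nat.le_total a d with h2 | h2 <;> omega
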